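/- Let W : ℝ^q → ℝ be continuously differentiable on the domain S of g with ∇W globally L-Lipschitz on S, let B be a symmetric positive definite q×q matrix satisfying v_min ‖x‖² ≤ ‖x‖_B² for all x ∈ ℝ^q with v_min > 0, and let s ∈ S with h := −B⁻¹ ∇W(s). Then for every γ > 0, every H ∈ ℝ^q and every β > 0, writing p_H := prox_{γg}^B(s + γH) and p := prox_{γg}^B(s + γh), one has: W(p_H) + g(p_H) ≤ W(s) + g(s) − γ⁻¹ (1 − β/4 − Lγ/v_min) ‖p − s‖_B² − γ⁻¹ (1 − 1/β − Lγ/v_min) ‖p_H − p‖_B² + γ ‖H − h‖_B². -/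

import Mathlib

open scoped RealInnerProductSpace BigOperators
open Matrix

variable {q : ℕ}

/-- The action of a `q × q` real matrix on `EuclideanSpace ℝ (Fin q)`. -/
noncomputable def mulVecE (B : Matrix (Fin q) (Fin q) ℝ) (x : EuclideanSpace ℝ (Fin q)) :
    EuclideanSpace ℝ (Fin q) :=
  (EuclideanSpace.equiv (Fin q) ℝ).symm (B.mulVec (EuclideanSpace.equiv (Fin q) ℝ x))

/-- The `B`-inner product `⟨x, y⟩_B := ⟨B x, y⟩`. -/
noncomputable def binner (B : Matrix (Fin q) (Fin q) ℝ) (x y : EuclideanSpace ℝ (Fin q)) : ℝ :=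
  ⟪mulVecE B x, y⟫

/-- The squared `B`-norm `‖x‖_B² := ⟨B x, x⟩`. -/
noncomputable def bnormSq (B : Matrix (Fin q) (Fin q) ℝ) (x : EuclideanSpace ℝ (Fin q)) : ℝ :=
  binner B x x

/-- `g : ℝ^q → (−∞, +∞]` is proper, lower semicontinuous and convex. -/
def ProperLscConvex (g : EuclideanSpace ℝ (Fin q) → EReal) : Prop :=
  (∀ x, g x ≠ ⊥) ∧ (∃ x, g x ≠ ⊤) ∧ LowerSemicontinuous g ∧
    ∀ x y : EuclideanSpace ℝ (Fin q), ∀ a b : ℝ, 0 ≤ a → 0 ≤ b → a + b = 1 →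
      g (a • x + b • y) ≤ (a : EReal) * g x + (b : EReal) * g y

/-- The objective function `x ↦ γ g(x) + (1/2) ‖x − s‖_B²` defining the
variable-metric proximity operator. -/
noncomputable def proxObj (γ : ℝ) (B : Matrix (Fin q) (Fin q) ℝ)
    (g : EuclideanSpace ℝ (Fin q) → EReal) (s x : EuclideanSpace ℝ (Fin q)) : EReal :=
  (γ : EReal) * g x + ((2⁻¹ * bnormSq B (x - s) : ℝ) : EReal)

/-- `p = prox_{γ g}^B (s)`, i.e. `p` minimizes `x ↦ γ g(x) + (1/2) ‖x − s‖_B²` over `ℝ^q`. -/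
def IsProx (γ : ℝ) (B : Matrix (Fin q) (Fin q) ℝ)
    (g : EuclideanSpace ℝ (Fin q) → EReal) (s p : EuclideanSpace ℝ (Fin q)) : Prop :=
  ∀ x, proxObj γ B g s p ≤ proxObj γ B g s x

/-- `u ∈ ∂g(p)`, the convex subdifferential of `g` at `p`. -/
def InSubdiff (g : EuclideanSpace ℝ (Fin q) → EReal) (p u : EuclideanSpace ℝ (Fin q)) : Prop :=
  ∀ x, g p + ((⟪u, x - p⟫ : ℝ) : EReal) ≤ g x

/-! ### Auxiliary lemmas on `binner` and `bnormSq` -/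

section BinnerAlgebra

variable (B : Matrix (Fin q) (Fin q) ℝ) (x y z : EuclideanSpace ℝ (Fin q))

lemma binner_eq_dot : binner B x y = dotProduct (B.mulVec x) y := by
  simp [binner, mulVecE, PiLp.inner_apply, dotProduct, RCLike.inner_apply]
  exact Finset.sum_congr rfl (fun i _ => mul_comm _ _)

lemma mulVecE_add : mulVecE B (x + y) = mulVecE B x + mulVecE B y := by
  simp [mulVecE, Matrix.mulVec_add]

lemma mulVecE_smul (c : ℝ) : mulVecE B (c • x) = c • mulVecE B x := by
  simp [mulVecE, Matrix.mulVec_smul]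

lemma binner_add_left : binner B (x + y) z = binner B x z + binner B y z := by
  rw [binner, mulVecE_add, inner_add_left]; rfl

lemma binner_add_right : binner B x (y + z) = binner B x y + binner B x z := by
  rw [binner, inner_add_right]; rfl

lemma binner_smul_left (c : ℝ) : binner B (c • x) y = c * binner B x y := by
  rw [binner, mulVecE_smul, real_inner_smul_left]; rfl

lemma binner_smul_right (c : ℝ) : binner B x (c • y) = c * binner B x y := by
  rw [binner, real_inner_smul_right]; rfl

lemma binner_comm (hB : B.IsHermitian) : binner B x y = binner B y x := by
  rw [binner_eq_dot, binner_eq_dot, dotProduct_comm, Matrix.dotProduct_mulVec,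
    ← Matrix.mulVec_transpose]
  have hBt : Bᵀ = B := by simpa [Matrix.conjTranspose_eq_transpose_of_trivial] using hB.eq
  rw [hBt]

variable {B}

lemma binner_neg_left : binner B (-x) y = -binner B x y := by
  have := binner_smul_left B x y (-1)
  simpa using this

lemma binner_neg_right : binner B x (-y) = -binner B x y := by
  have := binner_smul_right B x y (-1)
  simpa using this

lemma binner_sub_left : binner B (x - y) z = binner B x z - binner B y z := by
  rw [sub_eq_add_neg, binner_add_left, binner_neg_left]; ring

lemma binner_sub_right : binner B x (y - z) = binner B x y - binner B x z := by
  rw [sub_eq_add_neg, binner_add_right, binner_neg_right]; ring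

lemma bnormSq_nonneg (hB : B.PosDef) (x : EuclideanSpace ℝ (Fin q)) : 0 ≤ bnormSq B x := by
  have h := hB.posSemidef.dotProduct_mulVec_nonneg (⇑x)
  rw [bnormSq, binner_eq_dot, dotProduct_comm]
  simpa using h

/-- Expansion of `‖a + t b‖_B²`. -/
lemma bnormSq_add_smul (hB : B.IsHermitian) (a b : EuclideanSpace ℝ (Fin q)) (t : ℝ) :
    bnormSq B (a + t • b) = bnormSq B a + 2 * t * binner B a b + t ^ 2 * bnormSq B b := by
  rw [bnormSq, binner_add_left, binner_add_right, binner_add_right, binner_smul_left,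
    binner_smul_right, binner_smul_left, binner_smul_right, bnormSq, bnormSq,
    binner_comm B b a hB]
  ring

lemma bnormSq_add (hB : B.IsHermitian) (a b : EuclideanSpace ℝ (Fin q)) :
    bnormSq B (a + b) = bnormSq B a + 2 * binner B a b + bnormSq B b := by
  have := bnormSq_add_smul hB a b 1
  simpa using this

/-- Cauchy–Schwarz for the `B`-inner product. -/
lemma binner_sq_le (hB : B.PosDef) (u v : EuclideanSpace ℝ (Fin q)) :
    (binner B u v) ^ 2 ≤ bnormSq B u * bnormSq B v := by
  set a := bnormSq B u with ha
  set b := bnormSq B v with hbdef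
  set c := binner B u v with hc
  have ha0 : 0 ≤ a := bnormSq_nonneg hB u
  have hb0 : 0 ≤ b := bnormSq_nonneg hB v
  have key : ∀ t : ℝ, 0 ≤ a + 2 * t * c + t ^ 2 * b := by
    intro t
    have := bnormSq_nonneg hB (u + t • v)
    rwa [bnormSq_add_smul hB.isHermitian] at this
  rcases eq_or_lt_of_le hb0 with hb | hb
  · -- b = 0 : show c = 0
    have hc0 : c = 0 := by
      by_contra hne
      have h1 := key (-(a + 1) / (2 * c))
      rw [← hb] at h1
      have h2 : a + 2 * (-(a + 1) / (2 * c)) * c + (-(a + 1) / (2 * c)) ^ 2 * 0 = -1 := by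
        field_simp; ring
      rw [h2] at h1; linarith
    rw [hc0, ← hb]; nlinarith
  · have h1 := key (-c / b)
    have h2 : a + 2 * (-c / b) * c + (-c / b) ^ 2 * b = a - c ^ 2 / b := by
      field_simp; ring
    rw [h2] at h1
    have := (div_le_iff₀ hb).mp (by linarith : c ^ 2 / b ≤ a)
    linarith [this]

end BinnerAlgebra

/-! ### Finiteness lemmas -/

section Finiteness

variable {g : EuclideanSpace ℝ (Fin q) → EReal}

lemma coe_toReal_of_ne_top (hg : ProperLscConvex g) {x : EuclideanSpace ℝ (Fin q)}
    (hx : g x ≠ ⊤) : g x = ((g x).toReal : EReal) :=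
  (EReal.coe_toReal hx (hg.1 x)).symm

/-- points on a segment between two points of the domain stay in the domain -/
lemma seg_ne_top (hg : ProperLscConvex g) {a b : EuclideanSpace ℝ (Fin q)}
    (ha : g a ≠ ⊤) (hb : g b ≠ ⊤) {t : ℝ} (ht0 : 0 ≤ t) (ht1 : t ≤ 1) :
    g (a + t • (b - a)) ≠ ⊤ := by
  have hcv := hg.2.2.2 a b (1 - t) t (by linarith) ht0 (by ring)
  have heq : (1 - t) • a + t • b = a + t • (b - a) := by
    rw [sub_smul, smul_sub, one_smul]; abel
  rw [heq] at hcv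
  have hac := coe_toReal_of_ne_top hg ha
  have hbc := coe_toReal_of_ne_top hg hb
  rw [hac, hbc, ← EReal.coe_mul, ← EReal.coe_mul, ← EReal.coe_add] at hcv
  exact ne_top_of_le_ne_top (EReal.coe_ne_top _) hcv

/-- the prox point is in the domain of `g` -/
lemma prox_ne_top (hg : ProperLscConvex g) {γ : ℝ} (hγ : 0 < γ)
    {B : Matrix (Fin q) (Fin q) ℝ} {z p : EuclideanSpace ℝ (Fin q)}
    (hp : IsProx γ B g z p) : g p ≠ ⊤ := by
  obtain ⟨x0, hx0⟩ := hg.2.1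
  intro htop
  have h1 := hp x0
  rw [proxObj, proxObj, htop, EReal.coe_mul_top_of_pos (by exact_mod_cast hγ),
    EReal.top_add_coe, coe_toReal_of_ne_top hg hx0, ← EReal.coe_mul, ← EReal.coe_add] at h1
  exact (EReal.coe_ne_top _) (top_le_iff.mp h1)

end Finiteness

/-! ### The subgradient inequality at a prox point -/

lemma prox_subgrad {g : EuclideanSpace ℝ (Fin q) → EReal} (hg : ProperLscConvex g)
    {B : Matrix (Fin q) (Fin q) ℝ} (hB : B.PosDef)
    {γ : ℝ} (hγ : 0 < γ) {z p : EuclideanSpace ℝ (Fin q)}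
    (hp : IsProx γ B g z p) (hpfin : g p ≠ ⊤)
    {x : EuclideanSpace ℝ (Fin q)} (hx : g x ≠ ⊤) :
    γ * (g p).toReal + binner B (z - p) (x - p) ≤ γ * (g x).toReal := by
  set gp := (g p).toReal with hgp
  set gx := (g x).toReal with hgx
  set C := bnormSq B (x - p) with hC
  have hC0 : 0 ≤ (2:ℝ)⁻¹ * C := by
    have := bnormSq_nonneg hB (x - p)
    rw [← hC] at this
    linarith
  -- key inequality for every t ∈ (0, 1]
  have key : ∀ t : ℝ, 0 < t → t ≤ 1 →
      0 ≤ γ * (gx - gp) + binner B (p - z) (x - p) + t * (2⁻¹ * C) := by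
    intro t ht0 ht1
    set xt := p + t • (x - p) with hxt
    have hxtfin : g xt ≠ ⊤ := seg_ne_top hg hpfin hx (le_of_lt ht0) ht1
    set gt := (g xt).toReal with hgt
    -- convexity bound
    have hcv := hg.2.2.2 p x (1 - t) t (by linarith) (le_of_lt ht0) (by ring)
    have heq : (1 - t) • p + t • x = xt := by
      rw [hxt, sub_smul, smul_sub, one_smul]; abel
    rw [heq, coe_toReal_of_ne_top hg hpfin, coe_toReal_of_ne_top hg hx,
      coe_toReal_of_ne_top hg hxtfin, ← EReal.coe_mul, ← EReal.coe_mul,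
      ← EReal.coe_add, EReal.coe_le_coe_iff] at hcv
    -- prox inequality
    have hpx := hp xt
    rw [proxObj, proxObj, coe_toReal_of_ne_top hg hpfin, coe_toReal_of_ne_top hg hxtfin,
      ← EReal.coe_mul, ← EReal.coe_mul, ← EReal.coe_add, ← EReal.coe_add,
      EReal.coe_le_coe_iff] at hpx
    -- expand the quadratic
    have hexp : bnormSq B (xt - z) =
        bnormSq B (p - z) + 2 * t * binner B (p - z) (x - p) + t ^ 2 * C := by
      have : xt - z = (p - z) + t • (x - p) := by rw [hxt]; abel
      rw [this, bnormSq_add_smul hB.isHermitian]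
    rw [hexp] at hpx
    -- combine with convexity and divide by t
    have h1 : γ * gp ≤ γ * ((1 - t) * gp + t * gx) +
        (t * binner B (p - z) (x - p) + 2⁻¹ * t ^ 2 * C) := by
      have h2 : γ * gt ≤ γ * ((1 - t) * gp + t * gx) :=
        mul_le_mul_of_nonneg_left hcv (le_of_lt hγ)
      nlinarith [hpx]
    have h3 : 0 ≤ t * (γ * (gx - gp) + binner B (p - z) (x - p) + t * (2⁻¹ * C)) := by
      nlinarith [h1]
    have h6 : t * 0 ≤ t * (γ * (gx - gp) + binner B (p - z) (x - p) + t * (2⁻¹ * C)) := by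
      linarith [h3]
    exact le_of_mul_le_mul_left h6 ht0
  -- take the limit t → 0⁺
  have main : 0 ≤ γ * (gx - gp) + binner B (p - z) (x - p) := by
    set A := γ * (gx - gp) + binner B (p - z) (x - p) with hA
    by_contra hneg
    push_neg at hneg
    rcases eq_or_lt_of_le hC0 with hc | hc
    · have := key 1 one_pos le_rfl
      rw [← hc] at this; linarith
    · have htpos : 0 < -A / (2⁻¹ * C) := div_pos (by linarith) hc
      set t := min 1 (-A / (2⁻¹ * C) / 2) with htdef
      have ht0 : 0 < t := lt_min one_pos (by positivity)
      have ht1 : t ≤ 1 := min_le_left _ _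
      have h4 := key t ht0 ht1
      have h5 : t * (2⁻¹ * C) ≤ -A / 2 := by
        have hle := mul_le_mul_of_nonneg_right (min_le_right 1 (-A / (2⁻¹ * C) / 2)) (le_of_lt hc)
        have hCne : C ≠ 0 := by linarith
        have heq : -A / (2⁻¹ * C) / 2 * (2⁻¹ * C) = -A / 2 := by
          field_simp
        rw [heq] at hle
        exact hle
      linarith
  have hzp : binner B (z - p) (x - p) = -binner B (p - z) (x - p) := by
    have : z - p = -(p - z) := by abel
    rw [this, binner_neg_left]
  rw [hzp]; linarith

lemma descent_lemma {g : EuclideanSpace ℝ (Fin q) → EReal} (hg : ProperLscConvex g)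
    {W : EuclideanSpace ℝ (Fin q) → ℝ} {gradW : EuclideanSpace ℝ (Fin q) → EuclideanSpace ℝ (Fin q)}
    (hdiff : ∀ x, g x < ⊤ → HasGradientAt W (gradW x) x)
    {L : ℝ} (hL : 0 ≤ L)
    (hlip : ∀ x, g x < ⊤ → ∀ x', g x' < ⊤ → ‖gradW x - gradW x'‖ ≤ L * ‖x - x'‖)
    {a b : EuclideanSpace ℝ (Fin q)} (ha : g a < ⊤) (hb : g b < ⊤) :
    W b ≤ W a + ⟪gradW a, b - a⟫ + L / 2 * ‖b - a‖ ^ 2 := by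
  set d := b - a with hd
  have hfin : ∀ t : ℝ, 0 ≤ t → t ≤ 1 → g (a + t • d) < ⊤ := by
    intro t h0 h1
    exact lt_top_iff_ne_top.mpr (seg_ne_top hg ha.ne hb.ne h0 h1)
  set ψ : ℝ → ℝ := fun t =>
    W (a + t • d) - t * ⟪gradW a, d⟫ - L / 2 * t ^ 2 * ‖d‖ ^ 2 with hψdef
  have hψ : ∀ t : ℝ, 0 ≤ t → t ≤ 1 → HasDerivAt ψ
      (⟪gradW (a + t • d), d⟫ - ⟪gradW a, d⟫ - L * t * ‖d‖ ^ 2) t := by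
    intro t h0 h1
    have hline : HasDerivAt (fun u : ℝ => a + u • d) d t := by
      simpa using ((hasDerivAt_id t).smul_const d).const_add a
    have hF := hasGradientAt_iff_hasFDerivAt.mp (hdiff _ (hfin t h0 h1))
    have h1' : HasDerivAt (fun u : ℝ => W (a + u • d)) ⟪gradW (a + t • d), d⟫ t := by
      have := hF.comp_hasDerivAt t hline
      simp at this
      exact this
    have h2 : HasDerivAt (fun u : ℝ => u * ⟪gradW a, d⟫) ⟪gradW a, d⟫ t := by
      simpa using (hasDerivAt_id t).mul_const (⟪gradW a, d⟫ : ℝ)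
    have h3 : HasDerivAt (fun u : ℝ => L / 2 * u ^ 2 * ‖d‖ ^ 2) (L * t * ‖d‖ ^ 2) t := by
      have := ((hasDerivAt_pow 2 t).const_mul (L / 2)).mul_const (‖d‖ ^ 2)
      refine this.congr_deriv ?_
      ring
    exact (h1'.sub h2).sub h3
  have hcont : ContinuousOn ψ (Set.Icc 0 1) := by
    intro t ht
    exact ((hψ t ht.1 ht.2).continuousAt).continuousWithinAt
  have hdiffOn : DifferentiableOn ℝ ψ (interior (Set.Icc (0:ℝ) 1)) := by
    intro t ht
    rw [interior_Icc] at ht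
    exact ((hψ t ht.1.le ht.2.le).differentiableAt).differentiableWithinAt
  have hder : ∀ t ∈ interior (Set.Icc (0:ℝ) 1), deriv ψ t ≤ 0 := by
    intro t ht
    rw [interior_Icc] at ht
    rw [(hψ t ht.1.le ht.2.le).deriv]
    have hsub : (⟪gradW (a + t • d), d⟫ : ℝ) - ⟪gradW a, d⟫ = ⟪gradW (a + t • d) - gradW a, d⟫ := by
      rw [inner_sub_left]
    have hcs : (⟪gradW (a + t • d) - gradW a, d⟫ : ℝ) ≤ ‖gradW (a + t • d) - gradW a‖ * ‖d‖ :=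
      real_inner_le_norm _ _
    have hlipb : ‖gradW (a + t • d) - gradW a‖ ≤ L * ‖a + t • d - a‖ :=
      hlip _ (hfin t ht.1.le ht.2.le) _ ha
    have hna : ‖a + t • d - a‖ = t * ‖d‖ := by
      simp [norm_smul, abs_of_nonneg ht.1.le]
    rw [hna] at hlipb
    have : ‖gradW (a + t • d) - gradW a‖ * ‖d‖ ≤ L * (t * ‖d‖) * ‖d‖ :=
      mul_le_mul_of_nonneg_right hlipb (norm_nonneg _)
    rw [hsub]
    nlinarith [hcs]
  have hanti := antitoneOn_of_deriv_nonpos (convex_Icc 0 1) hcont hdiffOn hder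
  have h01 := hanti (Set.left_mem_Icc.mpr zero_le_one) (Set.right_mem_Icc.mpr zero_le_one)
    zero_le_one
  have hψ0 : ψ 0 = W a := by simp [hψdef]
  have hψ1 : ψ 1 = W b - ⟪gradW a, d⟫ - L / 2 * ‖d‖ ^ 2 := by
    have hab : a + d = b := by rw [hd]; abel
    simp [hψdef, hab]
  rw [hψ0, hψ1] at h01
  linarith

set_option maxHeartbeats 1000000 in
/-- Lyapunov inequality for `W + g`: with `h := −B⁻¹∇W(s)`,
`p_H := prox_{γ g}^B (s + γ H)` and `p := prox_{γ g}^B (s + γ h)`,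
`W(p_H) + g(p_H) ≤ W(s) + g(s) − γ⁻¹(1 − β/4 − Lγ/v_min)‖p − s‖_B²
  − γ⁻¹(1 − 1/β − Lγ/v_min)‖p_H − p‖_B² + γ‖H − h‖_B²`. -/
theorem lyapunov_inequality_W_plus_g
    {q : ℕ} (g : EuclideanSpace ℝ (Fin q) → EReal) (hg : ProperLscConvex g)
    (W : EuclideanSpace ℝ (Fin q) → ℝ)
    (gradW : EuclideanSpace ℝ (Fin q) → EuclideanSpace ℝ (Fin q))
    (hdiff : ∀ x, g x < ⊤ → HasGradientAt W (gradW x) x)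
    (L : ℝ) (hL : 0 < L)
    (hlip : ∀ x, g x < ⊤ → ∀ x', g x' < ⊤ → ‖gradW x - gradW x'‖ ≤ L * ‖x - x'‖)
    (B : Matrix (Fin q) (Fin q) ℝ) (hB : B.PosDef)
    (vmin : ℝ) (hvmin : 0 < vmin)
    (hlower : ∀ x : EuclideanSpace ℝ (Fin q), vmin * ‖x‖ ^ 2 ≤ bnormSq B x)
    (s : EuclideanSpace ℝ (Fin q)) (hs : g s < ⊤)
    (h : EuclideanSpace ℝ (Fin q)) (hh : h = -(mulVecE B⁻¹ (gradW s)))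
    (γ : ℝ) (hγ : 0 < γ) (H : EuclideanSpace ℝ (Fin q)) (β : ℝ) (hβ : 0 < β)
    (pH p : EuclideanSpace ℝ (Fin q))
    (hpH : IsProx γ B g (s + γ • H) pH) (hp : IsProx γ B g (s + γ • h) p) :
    ((W pH : ℝ) : EReal) + g pH ≤ ((W s : ℝ) : EReal) + g s +
      ((- γ⁻¹ * (1 - β / 4 - L * γ / vmin) * bnormSq B (p - s)
        - γ⁻¹ * (1 - 1 / β - L * γ / vmin) * bnormSq B (pH - p)
        + γ * bnormSq B (H - h) : ℝ) : EReal) := by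
  have hBH := hB.isHermitian
  have hsne : g s ≠ ⊤ := hs.ne
  have hpne : g p ≠ ⊤ := prox_ne_top hg hγ hp
  have hpHne : g pH ≠ ⊤ := prox_ne_top hg hγ hpH
  -- subgradient inequalities
  have i1 := prox_subgrad hg hB hγ hp hpne hsne
  have i2 := prox_subgrad hg hB hγ hpH hpHne hpne
  have i3 := prox_subgrad hg hB hγ hp hpne hpHne
  -- identities for the bilinear terms
  have e_i1 : binner B (s + γ • h - p) (s - p) =
      bnormSq B (p - s) - γ * binner B h (p - s) := by
    simp only [bnormSq, binner_sub_left, binner_sub_right, binner_add_left, binner_add_right,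
      binner_smul_left, binner_smul_right]
    ring
  have e_i2 : binner B (s + γ • H - pH) (p - pH) =
      binner B (p - s) (pH - p) + bnormSq B (pH - p) - γ * binner B H (pH - p) := by
    simp only [bnormSq, binner_sub_left, binner_sub_right, binner_add_left, binner_add_right,
      binner_smul_left, binner_smul_right]
    ring
  have e_i3 : binner B (s + γ • h - p) (pH - p) =
      -binner B (p - s) (pH - p) + γ * binner B h (pH - p) := by
    simp only [bnormSq, binner_sub_left, binner_sub_right, binner_add_left, binner_add_right,
      binner_smul_left, binner_smul_right]
    ring
  rw [e_i1] at i1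
  rw [e_i2] at i2
  rw [e_i3] at i3
  -- descent lemma
  have desc := descent_lemma hg hdiff hL.le hlip hs (lt_top_iff_ne_top.mpr hpHne)
  -- gradient identity : ⟪gradW s, v⟫ = - binner B h v
  have hBh : mulVecE B h = -gradW s := by
    rw [hh]
    have hmul : mulVecE B (mulVecE B⁻¹ (gradW s)) = gradW s := by
      simp only [mulVecE]
      simp only [ContinuousLinearEquiv.apply_symm_apply]
      rw [Matrix.mulVec_mulVec, Matrix.mul_nonsing_inv B hB.det_pos.ne'.isUnit,
        Matrix.one_mulVec]
      rfl
    have hneg : mulVecE B (-(mulVecE B⁻¹ (gradW s))) = -(mulVecE B (mulVecE B⁻¹ (gradW s))) := by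
      have := mulVecE_smul B (mulVecE B⁻¹ (gradW s)) (-1)
      simpa using this
    rw [hneg, hmul]
  have hgradinner : ∀ v : EuclideanSpace ℝ (Fin q), (⟪gradW s, v⟫ : ℝ) = -binner B h v := by
    intro v
    rw [binner, hBh, inner_neg_left, neg_neg]
  -- scalar abbreviations
  set gs := (g s).toReal with hgs
  set gp := (g p).toReal with hgp
  set gpH := (g pH).toReal with hgpH
  set A1 := bnormSq B (p - s) with hA1
  set A2 := bnormSq B (pH - p) with hA2
  set A3 := bnormSq B (H - h) with hA3
  set c1 := binner B (p - s) (pH - p) with hc1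
  set d1 := binner B h (p - s) with hd1
  set d2 := binner B h (pH - p) with hd2
  set e2 := binner B H (pH - p) with he2
  have hA1n : 0 ≤ A1 := by rw [hA1]; exact bnormSq_nonneg hB _
  have hA2n : 0 ≤ A2 := by rw [hA2]; exact bnormSq_nonneg hB _
  have hA3n : 0 ≤ A3 := by rw [hA3]; exact bnormSq_nonneg hB _
  have hCS1 : c1 ^ 2 ≤ A1 * A2 := by
    rw [hc1, hA1, hA2]; exact binner_sq_le hB _ _
  have hCS2 : (e2 - d2) ^ 2 ≤ A3 * A2 := by
    have h6 := binner_sq_le hB (H - h) (pH - p)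
    rw [binner_sub_left] at h6
    rw [he2, hd2, hA3, hA2]; exact h6
  have hexp : bnormSq B (pH - s) = A1 + 2 * c1 + A2 := by
    have hv : pH - s = (p - s) + (pH - p) := by abel
    rw [hA1, hA2, hc1, hv, bnormSq_add hBH]
  have hginner : (⟪gradW s, pH - s⟫ : ℝ) = -(d1 + d2) := by
    rw [hgradinner (pH - s)]
    have hv : pH - s = (p - s) + (pH - p) := by abel
    rw [hv, binner_add_right, hd1, hd2]
  clear_value gs gp gpH A1 A2 A3 c1 d1 d2 e2
  clear e_i1 e_i2 e_i3 hpH hp hdiff hlip hh hBh hgradinner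
  -- firm nonexpansiveness
  have firm : A2 ≤ γ * e2 - γ * d2 := by linarith [i2, i3]
  -- c2-bound : e2 - d2 ≤ γ * A3
  have hc2b : e2 - d2 ≤ γ * A3 := by
    rcases le_or_gt (e2 - d2) 0 with hle | hlt
    · have : 0 ≤ γ * A3 := mul_nonneg hγ.le hA3n
      linarith
    · have h7 : (e2 - d2) * (e2 - d2) ≤ (γ * A3) * (e2 - d2) := by nlinarith [hCS2, firm, hA3n]
      exact le_of_mul_le_mul_right h7 hlt
  -- Young inequality
  have hy : -c1 ≤ β / 4 * A1 + 1 / β * A2 := by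
    by_contra hcon
    push_neg at hcon
    have hx : (0:ℝ) ≤ β ^ 2 / 4 * A1 + A2 := by positivity
    have hy' : β ^ 2 / 4 * A1 + A2 < -(β * c1) := by
      have := mul_lt_mul_of_pos_left hcon hβ
      have heq : β * (β / 4 * A1 + 1 / β * A2) = β ^ 2 / 4 * A1 + A2 := by
        field_simp
      rw [heq] at this
      linarith
    have hpos : 0 < -(β * c1) := lt_of_le_of_lt hx hy'
    have hsq : (β ^ 2 / 4 * A1 + A2) ^ 2 < (β * c1) ^ 2 := by nlinarith [hy', hx]
    have hm : β ^ 2 * c1 ^ 2 ≤ β ^ 2 * (A1 * A2) :=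
      mul_le_mul_of_nonneg_left hCS1 (sq_nonneg β)
    nlinarith [hsq, hm, sq_nonneg (β ^ 2 / 4 * A1 - A2)]
  have hc1b : c1 ≤ (A1 + A2) / 2 := by
    nlinarith [hCS1, sq_nonneg (A1 - A2), hA1n, hA2n]
  -- descent in B-norm
  have hnb : L / 2 * ‖pH - s‖ ^ 2 ≤ L / (2 * vmin) * (A1 + 2 * c1 + A2) := by
    have h8 := hlower (pH - s)
    rw [hexp] at h8
    have h9 : ‖pH - s‖ ^ 2 ≤ (A1 + 2 * c1 + A2) / vmin := by
      rw [le_div_iff₀ hvmin]; linarith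
    calc L / 2 * ‖pH - s‖ ^ 2 ≤ L / 2 * ((A1 + 2 * c1 + A2) / vmin) :=
          mul_le_mul_of_nonneg_left h9 (by positivity)
      _ = L / (2 * vmin) * (A1 + 2 * c1 + A2) := by field_simp
  have desc' : W pH ≤ W s - d1 - d2 + L / (2 * vmin) * (A1 + 2 * c1 + A2) := by
    rw [hginner] at desc
    linarith [desc, hnb]
  -- divide the g-chain by γ
  have S : γ * gpH ≤ γ * gs - A1 - A2 - c1 + γ * d1 + γ * e2 := by linarith [i1, i2]
  have hdiv : gpH ≤ gs - γ⁻¹ * A1 - γ⁻¹ * A2 - γ⁻¹ * c1 + d1 + e2 := by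
    have hYeq : γ * (gs - γ⁻¹ * A1 - γ⁻¹ * A2 - γ⁻¹ * c1 + d1 + e2) =
        γ * gs - A1 - A2 - c1 + γ * d1 + γ * e2 := by
      field_simp
    have hS2 : γ * gpH ≤ γ * (gs - γ⁻¹ * A1 - γ⁻¹ * A2 - γ⁻¹ * c1 + d1 + e2) := by
      rw [hYeq]; exact S
    exact le_of_mul_le_mul_left hS2 hγ
  -- multiplied Young inequalities
  have hy' : -(γ⁻¹ * c1) ≤ γ⁻¹ * (β / 4 * A1 + 1 / β * A2) := by
    have := mul_le_mul_of_nonneg_left hy (inv_nonneg.mpr hγ.le)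
    linarith [this]
  have hLc1 : L / (2 * vmin) * (2 * c1) ≤ L / (2 * vmin) * (A1 + A2) := by
    have := mul_le_mul_of_nonneg_left (by linarith [hc1b] : 2 * c1 ≤ A1 + A2)
      (by positivity : (0:ℝ) ≤ L / (2 * vmin))
    linarith [this]
  -- the real-valued target inequality
  have hR : - γ⁻¹ * (1 - β / 4 - L * γ / vmin) * A1
      - γ⁻¹ * (1 - 1 / β - L * γ / vmin) * A2 + γ * A3 =
      (-(γ⁻¹ * A1) + γ⁻¹ * (β / 4 * A1) + L / vmin * A1)
      + (-(γ⁻¹ * A2) + γ⁻¹ * (1 / β * A2) + L / vmin * A2) + γ * A3 := by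
    field_simp
    ring
  have hreal : W pH + gpH ≤ W s + gs +
      (- γ⁻¹ * (1 - β / 4 - L * γ / vmin) * A1
       - γ⁻¹ * (1 - 1 / β - L * γ / vmin) * A2 + γ * A3) := by
    rw [hR]
    have hL2 : L / (2 * vmin) * (A1 + 2 * c1 + A2) ≤ L / vmin * A1 + L / vmin * A2 := by
      have : L / (2 * vmin) * (A1 + A2) + L / (2 * vmin) * (A1 + A2) =
          L / vmin * A1 + L / vmin * A2 := by field_simp; ring
      linarith [hLc1, this.le, this.ge]
    linarith [desc', hdiv, hy', hc2b, hL2]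
  -- back to `EReal`
  rw [coe_toReal_of_ne_top hg hpHne, coe_toReal_of_ne_top hg hsne, ← hgpH, ← hgs,
    ← EReal.coe_add, ← EReal.coe_add, ← EReal.coe_add, EReal.coe_le_coe_iff]
  exact hreal
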